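/- Conversely, every Hamiltonian cycle on n nodes (a cyclic permutation visiting all nodes) admits a feasible assignment of MTZ variables: setting u_i equal to the position of node i in the tour starting from node 1 satisfies u_1 = 1, 2 ≤ u_i ≤ n for i ≥ 2, and u_i − u_j + n·x_ij ≤ n − 1 for all i and all j ≥ 2 with i ≠ j. -/
import Mathlib


/-- Converse MTZ feasibility: every Hamiltonian cycle (a permutation whose
orbit of node 1 covers all nodes) admits feasible MTZ variables `u`, where
`u i` is the position of node `i` in the tour starting from node 1. -/
theorem mtz_feasible_of_hamiltonian (n : ℕ) (hn : 2 ≤ n)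
    (σ : Equiv.Perm (Fin n))
    (hham : ∀ j : Fin n, ∃ k : ℕ, k < n ∧ (σ ^ k) ⟨0, by omega⟩ = j) :
    ∃ u : Fin n → ℤ,
      u ⟨0, by omega⟩ = 1 ∧
      (∀ i : Fin n, i ≠ ⟨0, by omega⟩ → 2 ≤ u i ∧ u i ≤ n) ∧
      (∀ k : ℕ, k < n → u ((σ ^ k) ⟨0, by omega⟩) = k + 1) ∧
      (∀ i j : Fin n, j ≠ ⟨0, by omega⟩ → i ≠ j →
        u i - u j + n * (if σ i = j then (1 : ℤ) else 0) ≤ n - 1) := by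
  have hnpos : 0 < n := by omega
  set z : Fin n := ⟨0, by omega⟩ with hz
  set f : Fin n → Fin n := fun k => (σ ^ (k : ℕ)) z with hf
  have hsurj : Function.Surjective f := by
    intro j; obtain ⟨k, hk, h⟩ := hham j; exact ⟨⟨k, hk⟩, h⟩
  have hinj : Function.Injective f := Finite.injective_iff_surjective.mpr hsurj
  set p : Fin n → Fin n := Function.surjInv hsurj with hp
  have hfp : ∀ i, f (p i) = i := Function.surjInv_eq hsurj
  have hpf : ∀ k, p (f k) = k := fun k => hinj (hfp (f k))
  have hf0 : f ⟨0, hnpos⟩ = z := by simp [hf]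
  have hcycle : (σ ^ n) z = z := by
    obtain ⟨m, hm⟩ := hsurj ((σ ^ n) z)
    rcases Nat.eq_zero_or_pos (m : ℕ) with h0 | h0
    · have : (σ ^ (0:ℕ)) z = (σ ^ n) z := by rw [← h0]; exact hm
      simpa using this.symm
    · exfalso
      have hmlt : (m : ℕ) < n := m.isLt
      have h2 : (σ ^ (m:ℕ)) ((σ ^ (n - (m:ℕ))) z) = (σ ^ (m:ℕ)) z := by
        rw [← Equiv.Perm.mul_apply, ← pow_add]
        have : (m:ℕ) + (n - (m:ℕ)) = n := by omega
        rw [this]; exact hm.symm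
      have h3 : (σ ^ (n - (m:ℕ))) z = z := (Equiv.injective _) h2
      have h4 : f ⟨n - (m:ℕ), by omega⟩ = f ⟨0, hnpos⟩ := by
        simp only [hf]; rw [h3]; simp
      have := congrArg Fin.val (hinj h4)
      simp at this
      omega
  have hpz : p z = ⟨0, hnpos⟩ := by rw [← hf0, hpf]
  refine ⟨fun i => ((p i : ℕ) : ℤ) + 1, ?_, ?_, ?_, ?_⟩
  · simp [hpz]
  · intro i hi
    have h1 : p i ≠ ⟨0, hnpos⟩ := by
      intro h; apply hi; rw [← hfp i, h, hf0]
    have h2 : (p i : ℕ) ≠ 0 := fun h => h1 (Fin.ext h)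
    have h3 : (p i : ℕ) < n := (p i).isLt
    constructor <;> push_cast <;> omega
  · intro k hk
    show ((p ((σ ^ k) z) : ℕ) : ℤ) + 1 = k + 1
    have : (σ ^ k) z = f ⟨k, hk⟩ := rfl
    rw [this, hpf]
  · intro i j hj hij
    split_ifs with hσ
    · -- σ i = j, show u j = u i + 1
      have hki : f (p i) = i := hfp i
      rcases Nat.lt_or_ge ((p i : ℕ) + 1) n with hlt | hge
      · have hfj : f ⟨(p i : ℕ) + 1, hlt⟩ = j := by
          simp only [hf, pow_succ', Equiv.Perm.mul_apply]
          rw [show ((σ ^ (p i : ℕ)) z) = i from hki, hσ]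
        have hpj : p j = ⟨(p i : ℕ) + 1, hlt⟩ := by rw [← hfj, hpf]
        show ((p i : ℕ) : ℤ) + 1 - (((p j : ℕ) : ℤ) + 1) + n * 1 ≤ n - 1
        rw [hpj]
        push_cast
        omega
      · exfalso
        have h1 : (p i : ℕ) = n - 1 := by have := (p i).isLt; omega
        have : j = (σ ^ n) z := by
          rw [← hσ, ← hki]
          simp only [hf, h1]
          rw [← Equiv.Perm.mul_apply, ← pow_succ']
          have h5 : n - 1 + 1 = n := by omega
          rw [h5]
        exact hj (this.trans hcycle)
    · have h3 : (p i : ℕ) < n := (p i).isLt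
      have h4 : (0:ℕ) ≤ (p j : ℕ) := Nat.zero_le _
      push_cast
      omega
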